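/- Let A ∈ ℂ^{m×n×p} and W ∈ ℂ^{n×m×p} with rank_M(W *_M A) = rank_M(W) ≤ rank_M(A), and let X be an outer inverse of A with R_M(X) = R_M(W) and N_M(X) = N_M(W). Then for a tensor Z ∈ ℂ^{n×m×p}: Z *_M A *_M X = Z and X *_M A *_M Z = Z hold if and only if R_M(Z) ⊆ R_M(W) and N_M(W) ⊆ N_M(Z). -/
import Mathlib


open Matrix Finset

/-- A third-order tensor in `ℂ^{m×n×p}`, given by its `p` frontal slices. -/
abbrev Tensor (m n p : ℕ) := Fin p → Matrix (Fin m) (Fin n) ℂ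

/-- The transform `Â = A ×₃ M` (mode-3 product with `M`). -/
noncomputable def hatT {m n p : ℕ} (M : Matrix (Fin p) (Fin p) ℂ) (A : Tensor m n p) :
    Tensor m n p :=
  fun l => ∑ s, M l s • A s

/-- `mat(A)`: the block-diagonal matrix whose blocks are frontal slices of `A ×₃ M`. -/
noncomputable def matT {m n p : ℕ} (M : Matrix (Fin p) (Fin p) ℂ) (A : Tensor m n p) :
    Matrix (Fin m × Fin p) (Fin n × Fin p) ℂ :=
  Matrix.blockDiagonal (hatT M A)

/-- The M-product `A *_M B`, determined by `mat(A *_M B) = mat(A)·mat(B)`. -/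
noncomputable def mprod {m n k p : ℕ} (M : Matrix (Fin p) (Fin p) ℂ)
    (A : Tensor m n p) (B : Tensor n k p) : Tensor m k p :=
  fun l => ∑ s, M⁻¹ l s • (hatT M A s * hatT M B s)

/-- The conjugate transpose `A^*`, determined by `mat(A^*) = mat(A)^*`. -/
noncomputable def mstar {m n p : ℕ} (M : Matrix (Fin p) (Fin p) ℂ) (A : Tensor m n p) :
    Tensor n m p :=
  fun l => ∑ s, M⁻¹ l s • (hatT M A s)ᴴ

/-- The identity tensor `I_M ∈ ℂ^{m×m×p}`, determined by `mat(I_M) = I`. -/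
noncomputable def idT {p : ℕ} (M : Matrix (Fin p) (Fin p) ℂ) (m : ℕ) : Tensor m m p :=
  fun l => ∑ s, M⁻¹ l s • (1 : Matrix (Fin m) (Fin m) ℂ)

/-- M-product powers of a square tensor. -/
noncomputable def mpow {m p : ℕ} (M : Matrix (Fin p) (Fin p) ℂ) (A : Tensor m m p) :
    ℕ → Tensor m m p
  | 0 => idT M m
  | k + 1 => mprod M A (mpow M A k)

/-- `R_M(A)`: the column space of `mat(A)`. -/
noncomputable def rangeM {m n p : ℕ} (M : Matrix (Fin p) (Fin p) ℂ) (A : Tensor m n p) :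
    Submodule ℂ (Fin m × Fin p → ℂ) :=
  LinearMap.range (matT M A).mulVecLin

/-- `N_M(A)`: the kernel of `mat(A)`. -/
noncomputable def kerM {m n p : ℕ} (M : Matrix (Fin p) (Fin p) ℂ) (A : Tensor m n p) :
    Submodule ℂ (Fin n × Fin p → ℂ) :=
  LinearMap.ker (matT M A).mulVecLin

/-- `rank_M(A) = rank(mat(A))`. -/
noncomputable def rankM {m n p : ℕ} (M : Matrix (Fin p) (Fin p) ℂ) (A : Tensor m n p) : ℕ :=
  (matT M A).rank

/-- The first `s` lateral slices `Q(:,1:s,:)`. -/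
def latSlice {n s p : ℕ} (hsn : s ≤ n) (Q : Tensor n n p) : Tensor n s p :=
  fun l => (Q l).submatrix id (Fin.castLE hsn)

/-- The first `s` horizontal slices `R(1:s,:,:)`. -/
def horSlice {n m s p : ℕ} (hsn : s ≤ n) (R : Tensor n m p) : Tensor s m p :=
  fun l => (R l).submatrix (Fin.castLE hsn) id

/-- Frobenius norm of a complex matrix. -/
noncomputable def frobNorm {α β : Type*} [Fintype α] [Fintype β] (X : Matrix α β ℂ) : ℝ :=
  Real.sqrt (∑ i, ∑ j, ‖X i j‖ ^ 2)

lemma smulsum_collapse {m n p : ℕ} (M N : Matrix (Fin p) (Fin p) ℂ)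
    (hMN : M * N = 1) (f : Fin p → Matrix (Fin m) (Fin n) ℂ) (l : Fin p) :
    ∑ s, M l s • ∑ t, N s t • f t = f l := by
  have h1 : ∑ s, M l s • ∑ t, N s t • f t = ∑ t, (∑ s, M l s * N s t) • f t := by
    simp_rw [Finset.smul_sum, smul_smul]
    rw [Finset.sum_comm]
    simp_rw [Finset.sum_smul]
  have h2 : ∀ t, (∑ s, M l s * N s t) = (1 : Matrix (Fin p) (Fin p) ℂ) l t := by
    intro t; rw [← hMN, Matrix.mul_apply]
  rw [h1]
  simp_rw [h2]
  simp [Matrix.one_apply]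

lemma hatT_mprod {m n k p : ℕ} (M : Matrix (Fin p) (Fin p) ℂ) (hM : IsUnit M.det)
    (A : Tensor m n p) (B : Tensor n k p) (l : Fin p) :
    hatT M (mprod M A B) l = hatT M A l * hatT M B l :=
  smulsum_collapse M M⁻¹ (Matrix.mul_nonsing_inv M hM)
    (fun t => hatT M A t * hatT M B t) l

lemma matT_mprod {m n k p : ℕ} (M : Matrix (Fin p) (Fin p) ℂ) (hM : IsUnit M.det)
    (A : Tensor m n p) (B : Tensor n k p) :
    matT M (mprod M A B) = matT M A * matT M B := by
  rw [matT, matT, matT, ← Matrix.blockDiagonal_mul]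
  exact congrArg Matrix.blockDiagonal (funext (hatT_mprod M hM A B))

lemma matT_inj {m n p : ℕ} (M : Matrix (Fin p) (Fin p) ℂ) (hM : IsUnit M.det)
    {A B : Tensor m n p} (h : matT M A = matT M B) : A = B := by
  have hh : ∀ l, hatT M A l = hatT M B l := by
    intro l; ext i j
    have := congrFun (congrFun h (i, l)) (j, l)
    simpa [matT, Matrix.blockDiagonal_apply] using this
  funext l
  calc A l = ∑ s, M⁻¹ l s • hatT M A s :=
        (smulsum_collapse M⁻¹ M (Matrix.nonsing_inv_mul M hM) A l).symm
    _ = ∑ s, M⁻¹ l s • hatT M B s := by simp_rw [hh]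
    _ = B l := smulsum_collapse M⁻¹ M (Matrix.nonsing_inv_mul M hM) B l

lemma eq_of_mulVec_eq {α β : Type*} [Fintype β] [DecidableEq β]
    {P Q : Matrix α β ℂ} (h : ∀ v, P *ᵥ v = Q *ᵥ v) : P = Q := by
  ext i j
  have := congrFun (h (Pi.single j 1)) i
  simpa [Matrix.mulVec_single] using this

/-- Lemma 4.1: characterization of tensors `Z` absorbed by the outer inverse
`X = A^=_{R_M(W), N_M(W)}`. -/
theorem absorption_iff_range_null {m n p : ℕ}
    (M : Matrix (Fin p) (Fin p) ℂ) (hM : IsUnit M.det)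
    (A : Tensor m n p) (W X Z : Tensor n m p)
    (hr1 : rankM M (mprod M W A) = rankM M W) (hr2 : rankM M W ≤ rankM M A)
    (hout : mprod M X (mprod M A X) = X)
    (hRX : rangeM M X = rangeM M W) (hNX : kerM M X = kerM M W) :
    (mprod M Z (mprod M A X) = Z ∧ mprod M X (mprod M A Z) = Z) ↔
      (rangeM M Z ≤ rangeM M W ∧ kerM M W ≤ kerM M Z) := by
  have hxax : matT M X * (matT M A * matT M X) = matT M X := by
    have := congrArg (matT M) hout
    rwa [matT_mprod M hM, matT_mprod M hM] at this
  rw [← hRX, ← hNX]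
  constructor
  · rintro ⟨h1, h2⟩
    have h1' : matT M Z * (matT M A * matT M X) = matT M Z := by
      have := congrArg (matT M) h1
      rwa [matT_mprod M hM, matT_mprod M hM] at this
    have h2' : matT M X * (matT M A * matT M Z) = matT M Z := by
      have := congrArg (matT M) h2
      rwa [matT_mprod M hM, matT_mprod M hM] at this
    constructor
    · rintro v ⟨u, rfl⟩
      refine ⟨(matT M A * matT M Z).mulVecLin u, ?_⟩
      simp only [Matrix.mulVecLin_apply]
      rw [Matrix.mulVec_mulVec, h2']
    · intro v hv
      simp only [kerM, LinearMap.mem_ker, Matrix.mulVecLin_apply] at hv ⊢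
      calc matT M Z *ᵥ v = (matT M Z * (matT M A * matT M X)) *ᵥ v := by rw [h1']
        _ = matT M Z *ᵥ (matT M A *ᵥ (matT M X *ᵥ v)) := by
            rw [← Matrix.mulVec_mulVec, ← Matrix.mulVec_mulVec]
        _ = 0 := by rw [hv, Matrix.mulVec_zero, Matrix.mulVec_zero]
  · rintro ⟨hR, hN⟩
    constructor
    · apply matT_inj M hM
      rw [matT_mprod M hM, matT_mprod M hM]
      apply eq_of_mulVec_eq
      intro v
      rw [← Matrix.mulVec_mulVec, ← Matrix.mulVec_mulVec]
      have hker : matT M X *ᵥ (matT M A *ᵥ (matT M X *ᵥ v) - v) = 0 := by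
        rw [Matrix.mulVec_sub, sub_eq_zero]
        conv_rhs => rw [← hxax]
        rw [← Matrix.mulVec_mulVec, ← Matrix.mulVec_mulVec]
      have hzker : matT M Z *ᵥ (matT M A *ᵥ (matT M X *ᵥ v) - v) = 0 := by
        have hmem : (matT M A *ᵥ (matT M X *ᵥ v) - v) ∈ kerM M X := by
          simpa only [kerM, LinearMap.mem_ker, Matrix.mulVecLin_apply] using hker
        simpa only [kerM, LinearMap.mem_ker, Matrix.mulVecLin_apply] using hN hmem
      rw [Matrix.mulVec_sub, sub_eq_zero] at hzker
      exact hzker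
    · apply matT_inj M hM
      rw [matT_mprod M hM, matT_mprod M hM]
      apply eq_of_mulVec_eq
      intro v
      obtain ⟨u, hu⟩ := hR ⟨v, rfl⟩
      simp only [Matrix.mulVecLin_apply] at hu
      calc (matT M X * (matT M A * matT M Z)) *ᵥ v
          = matT M X *ᵥ (matT M A *ᵥ (matT M Z *ᵥ v)) := by
            rw [← Matrix.mulVec_mulVec, ← Matrix.mulVec_mulVec]
        _ = matT M X *ᵥ (matT M A *ᵥ (matT M X *ᵥ u)) := by rw [hu]
        _ = (matT M X * (matT M A * matT M X)) *ᵥ u := by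
            rw [← Matrix.mulVec_mulVec, ← Matrix.mulVec_mulVec]
        _ = matT M X *ᵥ u := by rw [hxax]
        _ = matT M Z *ᵥ v := hu
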